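/- For every f ∈ ℱ₂ and every ε > 0 there exists a polynomial p ∈ 𝒬′ with sup_{x∈[0,1]} |p(x) − f(x)| < ε; consequently the closure of 𝒬′_G in C([0,1]) with respect to the supremum norm equals ℱ₂. -/

import Mathlib

open Polynomial

/-- 𝒬′: real polynomials with p((0,1)) ⊆ (0,1), p < 0 on (-∞,0), p < 0 on (1,∞). -/
def memQ' (p : Polynomial ℝ) : Prop :=
  (∀ x ∈ Set.Ioo (0:ℝ) 1, p.eval x ∈ Set.Ioo (0:ℝ) 1) ∧
  (∀ x : ℝ, x < 0 → p.eval x < 0) ∧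
  (∀ x : ℝ, 1 < x → p.eval x < 0)

/-- 𝒬′_G: restrictions to [0,1] of polynomials in 𝒬′, as continuous maps. -/
def Q'G : Set C(Set.Icc (0:ℝ) 1, ℝ) :=
  {g | ∃ p : Polynomial ℝ, memQ' p ∧ g = p.toContinuousMapOn (Set.Icc (0:ℝ) 1)}

/-- ℱ₂ : continuous f : [0,1] → ℝ with f(0)=f(1)=0, 0 ≤ f ≤ 1. -/
def F2 : Set C(Set.Icc (0:ℝ) 1, ℝ) :=
  {f | f ⟨0, by norm_num⟩ = 0 ∧ f ⟨1, by norm_num⟩ = 0 ∧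
       ∀ x, f x ∈ Set.Icc (0:ℝ) 1}

lemma w_lower {κ x : ℝ} (h1 : κ ≤ x) (h2 : x ≤ 1 - κ) : κ * (1 - κ) ≤ x * (1 - x) := by
  nlinarith [mul_nonneg (sub_nonneg.2 h1) (sub_nonneg.2 h2)]

lemma approx_aux (f : C(Set.Icc (0:ℝ) 1, ℝ)) (hf : f ∈ F2) {ε : ℝ} (hε : 0 < ε)
    (hε1 : ε ≤ 1) :
    ∃ p : Polynomial ℝ, memQ' p ∧
      ∀ x : Set.Icc (0:ℝ) 1, |p.eval (x : ℝ) - f x| ≤ 13 * ε / 32 := by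
  obtain ⟨hf0, hf1, hf01⟩ := hf
  set ε₁ : ℝ := ε / 4 with hε₁def
  have hε₁pos : 0 < ε₁ := by positivity
  -- continuity at endpoints
  obtain ⟨δ₀, hδ₀, H0⟩ :=
    Metric.continuousAt_iff.mp (f.continuous.continuousAt
      (x := (⟨0, by norm_num⟩ : Set.Icc (0:ℝ) 1))) ε₁ hε₁pos
  obtain ⟨δ₁, hδ₁, H1⟩ :=
    Metric.continuousAt_iff.mp (f.continuous.continuousAt
      (x := (⟨1, by norm_num⟩ : Set.Icc (0:ℝ) 1))) ε₁ hε₁pos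
  set κ : ℝ := min (min δ₀ δ₁) 1 / 2 with hκdef
  have hκpos : 0 < κ := by positivity
  have hκhalf : κ ≤ 1 / 2 := by
    have : min (min δ₀ δ₁) 1 ≤ 1 := min_le_right _ _
    rw [hκdef]; linarith
  have hκδ₀ : κ < δ₀ := by
    have h1 : min (min δ₀ δ₁) 1 ≤ δ₀ := le_trans (min_le_left _ _) (min_le_left _ _)
    rw [hκdef]; linarith
  have hκδ₁ : κ < δ₁ := by
    have h1 : min (min δ₀ δ₁) 1 ≤ δ₁ := le_trans (min_le_left _ _) (min_le_right _ _)
    rw [hκdef]; linarith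
  have hnear0 : ∀ x : Set.Icc (0:ℝ) 1, (x : ℝ) ≤ κ → f x < ε₁ := by
    intro x hx
    have hd : dist x (⟨0, by norm_num⟩ : Set.Icc (0:ℝ) 1) < δ₀ := by
      rw [Subtype.dist_eq, Real.dist_eq]
      have : |(x : ℝ) - 0| = (x : ℝ) := by rw [sub_zero, abs_of_nonneg x.2.1]
      rw [this]; linarith
    have := H0 hd
    rw [hf0, Real.dist_eq, sub_zero] at this
    exact lt_of_le_of_lt (le_abs_self _) this
  have hnear1 : ∀ x : Set.Icc (0:ℝ) 1, 1 - κ ≤ (x : ℝ) → f x < ε₁ := by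
    intro x hx
    have hd : dist x (⟨1, by norm_num⟩ : Set.Icc (0:ℝ) 1) < δ₁ := by
      rw [Subtype.dist_eq, Real.dist_eq]
      have : |(x : ℝ) - 1| = 1 - (x : ℝ) := by
        rw [abs_of_nonpos (by linarith [x.2.2])]; ring
      rw [this]; linarith
    have := H1 hd
    rw [hf1, Real.dist_eq, sub_zero] at this
    exact lt_of_le_of_lt (le_abs_self _) this
  set c₀ : ℝ := κ * (1 - κ) with hc₀def
  have hc₀pos : 0 < c₀ := by
    have : κ < 1 := lt_of_le_of_lt hκhalf (by norm_num)
    exact mul_pos hκpos (by linarith)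
  set g : Set.Icc (0:ℝ) 1 → ℝ := fun x => max (f x - ε₁) 0 with hgdef
  set u : Set.Icc (0:ℝ) 1 → ℝ := fun x => g x / max ((x : ℝ) * (1 - (x : ℝ))) c₀ with hudef
  set h : Set.Icc (0:ℝ) 1 → ℝ := fun x => Real.sqrt (u x) with hhdef
  have hden_pos : ∀ x : Set.Icc (0:ℝ) 1, 0 < max ((x : ℝ) * (1 - (x : ℝ))) c₀ :=
    fun x => lt_of_lt_of_le hc₀pos (le_max_right _ _)
  have hg_nonneg : ∀ x, 0 ≤ g x := fun x => le_max_right _ _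
  have hg_le : ∀ x, g x ≤ 1 - ε₁ := by
    intro x
    apply max_le
    · linarith [(hf01 x).2]
    · rw [hε₁def]; linarith
  have hgf : ∀ x, |g x - f x| ≤ ε₁ := by
    intro x
    rcases max_cases (f x - ε₁) 0 with ⟨he, _⟩ | ⟨he, hlt⟩
    · rw [hgdef]; simp only []; rw [he]
      have hcancel : f x - ε₁ - f x = -ε₁ := by ring
      rw [hcancel, abs_neg, abs_of_pos hε₁pos]
    · rw [hgdef]; simp only []; rw [he]
      rw [zero_sub, abs_neg, abs_of_nonneg (hf01 x).1]
      linarith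
  have hu_nonneg : ∀ x, 0 ≤ u x := fun x => div_nonneg (hg_nonneg x) (hden_pos x).le
  have hguw : ∀ x : Set.Icc (0:ℝ) 1, g x = u x * ((x : ℝ) * (1 - (x : ℝ))) := by
    intro x
    by_cases hz : g x = 0
    · rw [hz, hudef]; simp only []; rw [hz, zero_div, zero_mul]
    · have hgpos : 0 < g x := lt_of_le_of_ne (hg_nonneg x) (Ne.symm hz)
      have hfε : ε₁ < f x := by
        by_contra hcon
        push_neg at hcon
        have : g x = 0 := max_eq_right (by linarith)
        exact hz this
      have hx1 : κ ≤ (x : ℝ) := by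
        by_contra hcon; push_neg at hcon
        exact absurd hfε (not_lt.2 (hnear0 x hcon.le).le)
      have hx2 : (x : ℝ) ≤ 1 - κ := by
        by_contra hcon; push_neg at hcon
        exact absurd hfε (not_lt.2 (hnear1 x hcon.le).le)
      have hwge : c₀ ≤ (x : ℝ) * (1 - (x : ℝ)) := w_lower hx1 hx2
      have hmax : max ((x : ℝ) * (1 - (x : ℝ))) c₀ = (x : ℝ) * (1 - (x : ℝ)) :=
        max_eq_left hwge
      have hwpos : (0:ℝ) < (x : ℝ) * (1 - (x : ℝ)) := lt_of_lt_of_le hc₀pos hwge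
      rw [hudef]; simp only []; rw [hmax, div_mul_cancel₀ _ (ne_of_gt hwpos)]
  have hu_bound : ∀ x, u x ≤ 1 / c₀ := by
    intro x
    apply div_le_div₀ (by norm_num) _ hc₀pos (le_max_right _ _)
    linarith [hg_le x, hε₁pos]
  set H : ℝ := Real.sqrt (1 / c₀) with hHdef
  have hHnn : 0 ≤ H := Real.sqrt_nonneg _
  have hhH : ∀ x, h x ≤ H := fun x => Real.sqrt_le_sqrt (hu_bound x)
  have hh_nonneg : ∀ x, 0 ≤ h x := fun x => Real.sqrt_nonneg _
  have hh_sq : ∀ x, h x ^ 2 = u x := fun x => Real.sq_sqrt (hu_nonneg x)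
  have hcont : Continuous h := by
    apply Real.continuous_sqrt.comp
    apply Continuous.div
    · exact (f.continuous.sub continuous_const).max continuous_const
    · exact (continuous_subtype_val.mul
        (continuous_const.sub continuous_subtype_val)).max continuous_const
    · exact fun x => ne_of_gt (hden_pos x)
  set δ : ℝ := min 1 (ε / (8 * (1 + 2 * H))) with hδdef
  have hδpos : 0 < δ := lt_min one_pos (by positivity)
  have hδ1 : δ ≤ 1 := min_le_left _ _
  have hδ2 : δ * (1 + 2 * H) ≤ ε / 8 := by
    have h1 : δ ≤ ε / (8 * (1 + 2 * H)) := min_le_right _ _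
    have h2 : (0:ℝ) < 1 + 2 * H := by linarith
    calc δ * (1 + 2 * H) ≤ ε / (8 * (1 + 2 * H)) * (1 + 2 * H) := by
          apply mul_le_mul_of_nonneg_right h1 h2.le
      _ = ε / 8 := by field_simp
  obtain ⟨r, hr⟩ := exists_polynomial_near_continuousMap 0 1 ⟨h, hcont⟩ δ hδpos
  rw [ContinuousMap.norm_lt_iff _ hδpos] at hr
  have hrx : ∀ x : Set.Icc (0:ℝ) 1, |r.eval (x : ℝ) - h x| < δ := by
    intro x
    have := hr x
    simpa [Polynomial.toContinuousMapOn, Polynomial.toContinuousMap, Real.norm_eq_abs]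
      using this
  have hw01 : ∀ x : Set.Icc (0:ℝ) 1,
      0 ≤ (x : ℝ) * (1 - (x : ℝ)) ∧ (x : ℝ) * (1 - (x : ℝ)) ≤ 1 / 4 := by
    intro x
    constructor
    · exact mul_nonneg x.2.1 (by linarith [x.2.2])
    · nlinarith [sq_nonneg ((x : ℝ) - 1 / 2)]
  have herr : ∀ x : Set.Icc (0:ℝ) 1,
      |(x : ℝ) * (1 - (x : ℝ)) * (r.eval (x : ℝ)) ^ 2 - g x| ≤ ε / 8 := by
    intro x
    set w : ℝ := (x : ℝ) * (1 - (x : ℝ)) with hwdef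
    have key : w * (r.eval (x : ℝ)) ^ 2 - g x
        = w * ((r.eval (x : ℝ) - h x) * (r.eval (x : ℝ) + h x)) := by
      rw [hguw x, ← hh_sq x]; ring
    rw [key, abs_mul, abs_mul (r.eval (x : ℝ) - h x)]
    have h1 : |w| ≤ 1 / 4 := by
      rw [abs_of_nonneg (hw01 x).1]; exact (hw01 x).2
    have h2 : |r.eval (x : ℝ) - h x| ≤ δ := (hrx x).le
    have h3 : |r.eval (x : ℝ) + h x| ≤ δ + 2 * H := by
      have : r.eval (x : ℝ) + h x = (r.eval (x : ℝ) - h x) + 2 * h x := by ring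
      rw [this]
      calc |(r.eval (x : ℝ) - h x) + 2 * h x|
          ≤ |r.eval (x : ℝ) - h x| + |2 * h x| := abs_add_le _ _
        _ ≤ δ + 2 * H := by
            rw [abs_mul, abs_two, abs_of_nonneg (hh_nonneg x)]
            have := hhH x
            linarith [h2]
    have h4 : δ + 2 * H ≤ 1 + 2 * H := by linarith
    calc |w| * (|r.eval (x : ℝ) - h x| * |r.eval (x : ℝ) + h x|)
        ≤ 1 * (δ * (1 + 2 * H)) := by
          apply mul_le_mul (by linarith) _ (by positivity) (by norm_num)
          apply mul_le_mul h2 (le_trans h3 h4) (abs_nonneg _) hδpos.le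
      _ = δ * (1 + 2 * H) := by ring
      _ ≤ ε / 8 := hδ2
  set η : ℝ := ε / 32 with hηdef
  have hηpos : 0 < η := by positivity
  set p : Polynomial ℝ := X * (1 - X) * (r ^ 2 + C η) with hpdef
  have hpeval : ∀ y : ℝ, p.eval y = y * (1 - y) * ((r.eval y) ^ 2 + η) := by
    intro y
    rw [hpdef]
    simp [eval_mul, eval_add, eval_sub, eval_pow, eval_one, eval_X, eval_C]
  have hfac_pos : ∀ y : ℝ, 0 < (r.eval y) ^ 2 + η :=
    fun y => add_pos_of_nonneg_of_pos (sq_nonneg _) hηpos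
  refine ⟨p, ⟨?_, ?_, ?_⟩, ?_⟩
  · -- p maps (0,1) into (0,1)
    intro y hy
    have hwpos : 0 < y * (1 - y) := mul_pos hy.1 (by linarith [hy.2])
    constructor
    · rw [hpeval y]; exact mul_pos hwpos (hfac_pos y)
    · rw [hpeval y]
      set x : Set.Icc (0:ℝ) 1 := ⟨y, ⟨hy.1.le, hy.2.le⟩⟩ with hxdef
      have he := herr x
      have hgl := hg_le x
      have hwle : y * (1 - y) ≤ 1 / 4 := (hw01 x).2
      have h5 : y * (1 - y) * (r.eval y) ^ 2 ≤ g x + ε / 8 := by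
        have h5' := (abs_le.1 he).2
        have hxy : (x : ℝ) = y := rfl
        rw [hxy] at h5'
        linarith
      have h6 : y * (1 - y) * η ≤ η / 4 := by
        have : y * (1 - y) * η ≤ (1 / 4) * η :=
          mul_le_mul_of_nonneg_right hwle hηpos.le
        linarith
      have : y * (1 - y) * ((r.eval y) ^ 2 + η)
          = y * (1 - y) * (r.eval y) ^ 2 + y * (1 - y) * η := by ring
      rw [this]
      have : g x ≤ 1 - ε / 4 := by rw [hε₁def] at hgl; linarith
      rw [hηdef] at h6 ⊢
      linarith
  · intro y hy
    rw [hpeval y]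
    exact mul_neg_of_neg_of_pos (mul_neg_of_neg_of_pos hy (by linarith)) (hfac_pos y)
  · intro y hy
    rw [hpeval y]
    exact mul_neg_of_neg_of_pos (mul_neg_of_pos_of_neg (by linarith) (by linarith)) (hfac_pos y)
  · intro x
    rw [hpeval (x : ℝ)]
    have he := herr x
    have hg := hgf x
    have hwle : (x : ℝ) * (1 - (x : ℝ)) ≤ 1 / 4 := (hw01 x).2
    have hwnn : 0 ≤ (x : ℝ) * (1 - (x : ℝ)) := (hw01 x).1
    have hηterm : |(x : ℝ) * (1 - (x : ℝ)) * η| ≤ ε / 32 := by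
      rw [abs_of_nonneg (mul_nonneg hwnn hηpos.le), hηdef]
      nlinarith
    have key : (x : ℝ) * (1 - (x : ℝ)) * ((r.eval (x : ℝ)) ^ 2 + η) - f x
        = ((x : ℝ) * (1 - (x : ℝ)) * (r.eval (x : ℝ)) ^ 2 - g x)
          + ((x : ℝ) * (1 - (x : ℝ)) * η) + (g x - f x) := by ring
    rw [key]
    calc |((x : ℝ) * (1 - (x : ℝ)) * (r.eval (x : ℝ)) ^ 2 - g x)
          + ((x : ℝ) * (1 - (x : ℝ)) * η) + (g x - f x)|
        ≤ |((x : ℝ) * (1 - (x : ℝ)) * (r.eval (x : ℝ)) ^ 2 - g x)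
          + ((x : ℝ) * (1 - (x : ℝ)) * η)| + |g x - f x| := abs_add_le _ _
      _ ≤ |(x : ℝ) * (1 - (x : ℝ)) * (r.eval (x : ℝ)) ^ 2 - g x|
          + |(x : ℝ) * (1 - (x : ℝ)) * η| + |g x - f x| := by
            linarith [abs_add_le ((x : ℝ) * (1 - (x : ℝ)) * (r.eval (x : ℝ)) ^ 2 - g x)
              ((x : ℝ) * (1 - (x : ℝ)) * η)]
      _ ≤ ε / 8 + ε / 32 + ε₁ := by linarith
      _ ≤ 13 * ε / 32 := by rw [hε₁def]; linarith

theorem stmt_6 :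
    (∀ f ∈ F2, ∀ ε : ℝ, 0 < ε →
      ∃ p : Polynomial ℝ, memQ' p ∧
        ‖p.toContinuousMapOn (Set.Icc (0:ℝ) 1) - f‖ < ε) ∧
    closure Q'G = F2 := by
  have main : ∀ f ∈ F2, ∀ ε : ℝ, 0 < ε →
      ∃ p : Polynomial ℝ, memQ' p ∧
        ‖p.toContinuousMapOn (Set.Icc (0:ℝ) 1) - f‖ < ε := by
    intro f hf ε hε
    set ε' : ℝ := min ε 1 with hε'def
    have hε'pos : 0 < ε' := lt_min hε one_pos
    have hε'1 : ε' ≤ 1 := min_le_right _ _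
    obtain ⟨p, hp, hap⟩ := approx_aux f hf hε'pos hε'1
    refine ⟨p, hp, ?_⟩
    rw [ContinuousMap.norm_lt_iff _ hε]
    intro x
    have := hap x
    have hb : 13 * ε' / 32 < ε := by
      have : ε' ≤ ε := min_le_left _ _
      linarith
    rw [ContinuousMap.sub_apply, Real.norm_eq_abs]
    have happly : (p.toContinuousMapOn (Set.Icc (0:ℝ) 1)) x = p.eval (x : ℝ) := rfl
    rw [happly]
    exact lt_of_le_of_lt this hb
  refine ⟨main, ?_⟩
  apply Set.Subset.antisymm
  · -- closure Q'G ⊆ F2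
    have hclosed : IsClosed F2 := by
      have hF2eq : F2 = {f : C(Set.Icc (0:ℝ) 1, ℝ) | f ⟨0, by norm_num⟩ = 0}
          ∩ ({f | f ⟨1, by norm_num⟩ = 0} ∩ {f | ∀ x, f x ∈ Set.Icc (0:ℝ) 1}) := rfl
      rw [hF2eq]
      apply IsClosed.inter
      · exact isClosed_eq (continuous_eval_const _) continuous_const
      apply IsClosed.inter
      · exact isClosed_eq (continuous_eval_const _) continuous_const
      · have : {f : C(Set.Icc (0:ℝ) 1, ℝ) | ∀ x, f x ∈ Set.Icc (0:ℝ) 1}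
            = ⋂ x, (fun f : C(Set.Icc (0:ℝ) 1, ℝ) => f x) ⁻¹' (Set.Icc (0:ℝ) 1) := by
          ext f; simp
        rw [this]
        exact isClosed_iInter fun x =>
          IsClosed.preimage (continuous_eval_const x) isClosed_Icc
    apply closure_minimal _ hclosed
    rintro _ ⟨p, hp, rfl⟩
    have hIcc : ∀ y ∈ Set.Icc (0:ℝ) 1, p.eval y ∈ Set.Icc (0:ℝ) 1 := by
      have hm : Set.MapsTo p.eval (Set.Ioo (0:ℝ) 1) (Set.Icc (0:ℝ) 1) :=
        fun y hy => Set.Ioo_subset_Icc_self (hp.1 y hy)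
      have hm2 := hm.closure p.continuous
      rw [closure_Ioo (by norm_num : (0:ℝ) ≠ 1), closure_Icc] at hm2
      exact hm2
    have heval0 : p.eval 0 = 0 := by
      have hle : p.eval 0 ≤ 0 := by
        have t0 : Filter.Tendsto (fun y => p.eval y) (nhdsWithin 0 (Set.Iio 0))
            (nhds (p.eval 0)) := (p.continuous.tendsto 0).mono_left nhdsWithin_le_nhds
        apply le_of_tendsto t0
        filter_upwards [self_mem_nhdsWithin] with y hy
        exact (hp.2.1 y hy).le
      have hge : 0 ≤ p.eval 0 := (hIcc 0 (by norm_num)).1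
      linarith
    have heval1 : p.eval 1 = 0 := by
      have hle : p.eval 1 ≤ 0 := by
        have t1 : Filter.Tendsto (fun y => p.eval y) (nhdsWithin 1 (Set.Ioi 1))
            (nhds (p.eval 1)) := (p.continuous.tendsto 1).mono_left nhdsWithin_le_nhds
        apply le_of_tendsto t1
        filter_upwards [self_mem_nhdsWithin] with y hy
        exact (hp.2.2 y hy).le
      have hge : 0 ≤ p.eval 1 := (hIcc 1 (by norm_num)).1
      linarith
    exact ⟨heval0, heval1, fun x => hIcc (x : ℝ) x.2⟩
  · -- F2 ⊆ closure Q'G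
    intro f hf
    rw [Metric.mem_closure_iff]
    intro ε hε
    obtain ⟨p, hp, hnorm⟩ := main f hf ε hε
    refine ⟨p.toContinuousMapOn (Set.Icc (0:ℝ) 1), ⟨p, hp, rfl⟩, ?_⟩
    rw [dist_eq_norm, ← norm_neg]
    simpa [neg_sub] using hnorm
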